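/- arXiv:2002.08408 — 5 statements merged into one kernel-verified Lean document; each statement's English description precedes it below -/
import Mathlib

section
/- Let G be a finite connected graph with Laplacian Q, r > 0, and let x* be a detailed-balance stationary state whose single consensus edge is (i,j) (all other edges are dissensus edges). If the effective resistance ω_ij = (e_i − e_j)ᵀ Q⁺ (e_i − e_j) satisfies ω_ij < 2/3 then the Jacobian J(x*) = r(3(e_i − e_j)(e_i − e_j)ᵀ − 2Q) is negative definite on the orthogonal complement of the constant vector (x* is stable), while if ω_ij > 2/3 then J(x*) has a positive eigenvalue (x* is unstable). -/
open Finset Matrix Polynomial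
open scoped Classical

/-- Right-hand side of the dynamics `dx_i/dt = Σ_{j~i} (r(x_i-x_j) - (x_i-x_j)^3)`. -/
noncomputable def rhs {N : ℕ} (G : SimpleGraph (Fin N)) (r : ℝ) (x : Fin N → ℝ) (i : Fin N) : ℝ :=
  ∑ j ∈ G.neighborFinset i, (r * (x i - x j) - (x i - x j) ^ 3)

/-- Graph Laplacian matrix. -/
noncomputable def lap {N : ℕ} (G : SimpleGraph (Fin N)) : Matrix (Fin N) (Fin N) ℝ :=
  fun i j => if i = j then (G.degree i : ℝ) else if G.Adj i j then -1 else 0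

/-- Laplacian of the subgraph of consensus edges (edges with `x i = x j`). -/
noncomputable def lapEq {N : ℕ} (G : SimpleGraph (Fin N)) (x : Fin N → ℝ) :
    Matrix (Fin N) (Fin N) ℝ :=
  fun i j => if i = j then (((G.neighborFinset i).filter (fun k => x i = x k)).card : ℝ)
    else if G.Adj i j ∧ x i = x j then -1 else 0

/-- Laplacian of the subgraph of dissensus edges (edges with `x i ≠ x j`). -/
noncomputable def lapNe {N : ℕ} (G : SimpleGraph (Fin N)) (x : Fin N → ℝ) :
    Matrix (Fin N) (Fin N) ℝ :=
  fun i j => if i = j then (((G.neighborFinset i).filter (fun k => x i ≠ x k)).card : ℝ)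
    else if G.Adj i j ∧ x i ≠ x j then -1 else 0

/-- `Qp` is the Moore–Penrose pseudoinverse of `Q`. -/
def IsMP {N : ℕ} (Q Qp : Matrix (Fin N) (Fin N) ℝ) : Prop :=
  Q * Qp * Q = Q ∧ Qp * Q * Qp = Qp ∧ (Q * Qp)ᵀ = Q * Qp ∧ (Qp * Q)ᵀ = Qp * Q

/-- The indicator difference vector `e_i - e_j`. -/
noncomputable def ev {N : ℕ} (i j : Fin N) : Fin N → ℝ := Pi.single i 1 - Pi.single j 1

/-- Effective resistance `ω_ij = (e_i-e_j)ᵀ Q⁺ (e_i-e_j)` given a pseudoinverse `Qp` of `Q`. -/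
noncomputable def effRes {N : ℕ} (Qp : Matrix (Fin N) (Fin N) ℝ) (i j : Fin N) : ℝ :=
  ev i j ⬝ᵥ (Qp *ᵥ ev i j)

/-- A detailed-balance state: every edge difference lies in `{0, √r, -√r}`. -/
def DetailedBalance {N : ℕ} (G : SimpleGraph (Fin N)) (r : ℝ) (x : Fin N → ℝ) : Prop :=
  ∀ i j, G.Adj i j → (x i - x j = 0 ∨ x i - x j = Real.sqrt r ∨ x i - x j = - Real.sqrt r)

/-- `M` is negative definite on the subspace orthogonal to the constant vector. -/
def NegDefOrth {N : ℕ} (M : Matrix (Fin N) (Fin N) ℝ) : Prop :=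
  ∀ z : Fin N → ℝ, z ≠ 0 → ∑ k, z k = 0 → z ⬝ᵥ (M *ᵥ z) < 0

/-- `M` has a positive eigenvalue. -/
def HasPosEig {N : ℕ} (M : Matrix (Fin N) (Fin N) ℝ) : Prop :=
  ∃ (μ : ℝ) (z : Fin N → ℝ), 0 < μ ∧ z ≠ 0 ∧ M *ᵥ z = μ • z

/-- The Jacobian of the dynamics `rhs` at a state `x`, defined entrywise via partial
derivatives. -/
noncomputable def jac {N : ℕ} (G : SimpleGraph (Fin N)) (r : ℝ) (x : Fin N → ℝ) :
    Matrix (Fin N) (Fin N) ℝ :=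
  fun i j => deriv (fun t => rhs G r (Function.update x j t) i) (x j)

/-- The solution `α(t) = α₀ (α₀² - (α₀²-1) e^{-2μrt})^{-1/2}` of the Bernoulli ODE. -/
noncomputable def alph (a0 mu r : ℝ) (t : ℝ) : ℝ :=
  a0 / Real.sqrt (a0 ^ 2 - (a0 ^ 2 - 1) * Real.exp (-(2 * mu * r * t)))

/-!
Put `u = Q⁺(e_i - e_j)`. The range of the Laplacian of a connected graph is the hyperplane of
vectors summing to zero, so `Q u = e_i - e_j` and `ω_ij = uᵀ Q u`, while the quadratic form of the
Jacobian is `zᵀ J z = r (3 ((e_i - e_j) ⬝ z)² - 2 zᵀ Q z)`. Cauchy–Schwarz for the positive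
semidefinite form `Q` gives `((e_i - e_j) ⬝ z)² = (uᵀ Q z)² ≤ ω_ij · zᵀ Q z`, and `zᵀ Q z > 0` for
nonzero `z ⊥ 𝟙`, so `J` is negative definite on `𝟙^⊥` when `3 ω_ij < 2`. Conversely
`uᵀ J u = r ω_ij (3 ω_ij - 2) > 0` when `3 ω_ij > 2`, and a symmetric matrix whose quadratic form
takes a positive value has a positive eigenvalue.
-/


section Matrix

variable {n : Type*} [Fintype n]

lemma Matrix.IsSymm.dotProduct_mulVec_comm {A : Matrix n n ℝ} (hA : A.IsSymm) (u z : n → ℝ) :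
    u ⬝ᵥ (A *ᵥ z) = (A *ᵥ u) ⬝ᵥ z := by
  rw [dotProduct_mulVec, ← mulVec_transpose, hA.eq]

lemma Matrix.PosSemidef.sq_dotProduct_mulVec_le {A : Matrix n n ℝ} (hA : A.PosSemidef)
    (a z : n → ℝ) : (a ⬝ᵥ (A *ᵥ z)) ^ 2 ≤ (a ⬝ᵥ (A *ᵥ a)) * (z ⬝ᵥ (A *ᵥ z)) := by
  have hsymm : A.IsSymm := isHermitian_iff_isSymm.mp hA.isHermitian
  have hcross : z ⬝ᵥ (A *ᵥ a) = a ⬝ᵥ (A *ᵥ z) := by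
    rw [hsymm.dotProduct_mulVec_comm, dotProduct_comm]
  have hquad : ∀ t : ℝ, 0 ≤ (z ⬝ᵥ (A *ᵥ z)) * (t * t) + (2 * (a ⬝ᵥ (A *ᵥ z))) * t
      + (a ⬝ᵥ (A *ᵥ a)) := by
    intro t
    have h := hA.dotProduct_mulVec_nonneg (a + t • z)
    simp only [star_trivial, mulVec_add, mulVec_smul, dotProduct_add, add_dotProduct,
      smul_dotProduct, dotProduct_smul, smul_eq_mul, hcross] at h
    linarith
  have hdisc := discrim_le_zero hquad
  rw [discrim] at hdisc
  linarith

lemma Matrix.IsHermitian.exists_pos_eigenvalue_of_dotProduct_mulVec_pos {M : Matrix n n ℝ}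
    (hM : M.IsHermitian) {z : n → ℝ} (hz : 0 < z ⬝ᵥ (M *ᵥ z)) :
    ∃ (μ : ℝ) (w : n → ℝ), 0 < μ ∧ w ≠ 0 ∧ M *ᵥ w = μ • w := by
  by_contra! hcon
  have hneg : (-M).IsHermitian := hM.neg
  have hpsd : (-M).PosSemidef := by
    refine hneg.posSemidef_iff_eigenvalues_nonneg.mpr fun k => ?_
    by_contra! hk
    have hw : ⇑(hneg.eigenvectorBasis k) ≠ 0 := by
      simpa using hneg.eigenvectorBasis.orthonormal.ne_zero k
    refine hcon _ _ (neg_pos.mpr hk) hw ?_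
    rw [neg_smul, ← hneg.mulVec_eigenvectorBasis k, neg_mulVec, neg_neg]
  have := hpsd.dotProduct_mulVec_nonneg z
  simp only [star_trivial, neg_mulVec, dotProduct_neg] at this
  linarith

lemma dotProduct_vecMulVec_self_mulVec (v z : n → ℝ) :
    z ⬝ᵥ (vecMulVec v v *ᵥ z) = (v ⬝ᵥ z) ^ 2 := by
  rw [vecMulVec_mulVec]
  simp [dotProduct_comm z v, sq]

end Matrix

namespace SimpleGraph

variable {V : Type*} [Fintype V] [DecidableEq V] {G : SimpleGraph V} [DecidableRel G.Adj]

lemma sum_lapMatrix_mulVec (w : V → ℝ) : ∑ k, (G.lapMatrix ℝ *ᵥ w) k = 0 := by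
  have h := (isSymm_lapMatrix ℝ G).dotProduct_mulVec_comm (fun _ => 1) w
  rw [lapMatrix_mulVec_const_eq_zero, zero_dotProduct] at h
  simpa [dotProduct] using h

lemma Connected.eq_zero_of_lapMatrix_mulVec_eq_zero (hG : G.Connected) {w : V → ℝ}
    (hw : G.lapMatrix ℝ *ᵥ w = 0) (hsum : ∑ k, w k = 0) : w = 0 := by
  have hconst := lapMatrix_mulVec_eq_zero_iff_forall_reachable G |>.mp hw
  ext a
  have hsum' : (Fintype.card V : ℝ) * w a = 0 := by
    rw [← hsum, Finset.sum_congr rfl fun b _ => hconst b a (hG.preconnected b a)]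
    simp
  have hcard : (Fintype.card V : ℝ) ≠ 0 := by
    have : Nonempty V := ⟨a⟩
    exact_mod_cast Fintype.card_ne_zero
  simpa [hcard] using hsum'

lemma Connected.dotProduct_lapMatrix_mulVec_pos (hG : G.Connected) {z : V → ℝ} (hz : z ≠ 0)
    (hsum : ∑ k, z k = 0) : 0 < z ⬝ᵥ (G.lapMatrix ℝ *ᵥ z) := by
  have hpsd := posSemidef_lapMatrix ℝ G
  refine (hpsd.dotProduct_mulVec_nonneg z).lt_of_ne' fun h => hz ?_
  exact hG.eq_zero_of_lapMatrix_mulVec_eq_zero ((hpsd.dotProduct_mulVec_zero_iff z).mp h) hsum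

lemma Connected.lapMatrix_mulVec_mulVec_eq_self (hG : G.Connected) {A : Matrix V V ℝ}
    (hLAL : G.lapMatrix ℝ * A * G.lapMatrix ℝ = G.lapMatrix ℝ)
    (hLA : (G.lapMatrix ℝ * A)ᵀ = G.lapMatrix ℝ * A) {v : V → ℝ} (hsum : ∑ k, v k = 0) :
    G.lapMatrix ℝ *ᵥ (A *ᵥ v) = v := by
  have hL : G.lapMatrix ℝ * (G.lapMatrix ℝ * A) = G.lapMatrix ℝ := by
    have h := congrArg transpose hLAL
    rwa [transpose_mul, hLA, (isSymm_lapMatrix ℝ G).eq] at h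
  have hker : G.lapMatrix ℝ *ᵥ (v - G.lapMatrix ℝ *ᵥ (A *ᵥ v)) = 0 := by
    rw [mulVec_sub, mulVec_mulVec, mulVec_mulVec, Matrix.mul_assoc, hL, sub_self]
  have hsum' : ∑ k, (v - G.lapMatrix ℝ *ᵥ (A *ᵥ v)) k = 0 := by
    simp only [Pi.sub_apply, Finset.sum_sub_distrib, hsum, sum_lapMatrix_mulVec, sub_self]
  exact (sub_eq_zero.mp (hG.eq_zero_of_lapMatrix_mulVec_eq_zero hker hsum')).symm

end SimpleGraph

lemma lap_eq_lapMatrix {N : ℕ} (G : SimpleGraph (Fin N)) : lap G = G.lapMatrix ℝ := by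
  ext a b
  by_cases hab : a = b
  · subst hab
    simp [lap, SimpleGraph.lapMatrix, SimpleGraph.degMatrix]
  · by_cases hadj : G.Adj a b <;>
      simp [lap, SimpleGraph.lapMatrix, SimpleGraph.degMatrix, hab, hadj]

lemma isSymm_lap {N : ℕ} (G : SimpleGraph (Fin N)) : (lap G).IsSymm := by
  rw [lap_eq_lapMatrix]; exact G.isSymm_lapMatrix ℝ

lemma sum_ev {N : ℕ} (i j : Fin N) : ∑ k, ev i j k = 0 := by
  simp [ev, Finset.sum_sub_distrib]

lemma dotProduct_jacobian_mulVec {n : Type*} [Fintype n] (r : ℝ) (v : n → ℝ)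
    (Q : Matrix n n ℝ) (z : n → ℝ) :
    z ⬝ᵥ ((r • ((3 : ℝ) • vecMulVec v v - (2 : ℝ) • Q)) *ᵥ z) =
      r * (3 * (v ⬝ᵥ z) ^ 2 - 2 * (z ⬝ᵥ (Q *ᵥ z))) := by
  simp only [smul_mulVec, sub_mulVec, dotProduct_smul, dotProduct_sub,
    dotProduct_vecMulVec_self_mulVec, smul_eq_mul]

section EffectiveResistance

variable {N : ℕ} {G : SimpleGraph (Fin N)} {Qp : Matrix (Fin N) (Fin N) ℝ}

lemma lap_mulVec_mulVec_ev (hG : G.Connected) (hQp : IsMP (lap G) Qp) (i j : Fin N) :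
    lap G *ᵥ (Qp *ᵥ ev i j) = ev i j := by
  rw [lap_eq_lapMatrix] at hQp ⊢
  exact hG.lapMatrix_mulVec_mulVec_eq_self hQp.1 hQp.2.2.1 (sum_ev i j)

lemma sq_ev_dotProduct_le_effRes_mul (hG : G.Connected) (hQp : IsMP (lap G) Qp) (i j : Fin N)
    (z : Fin N → ℝ) : (ev i j ⬝ᵥ z) ^ 2 ≤ effRes Qp i j * (z ⬝ᵥ (lap G *ᵥ z)) := by
  have hpot := lap_mulVec_mulVec_ev hG hQp i j
  have hpsd : (lap G).PosSemidef := by rw [lap_eq_lapMatrix]; exact G.posSemidef_lapMatrix ℝ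
  have hcs := hpsd.sq_dotProduct_mulVec_le (Qp *ᵥ ev i j) z
  rwa [(isSymm_lap G).dotProduct_mulVec_comm, hpot, dotProduct_comm (Qp *ᵥ ev i j)] at hcs

lemma negDefOrth_jacobian_of_effRes_lt (hG : G.Connected) (hQp : IsMP (lap G) Qp) {r : ℝ}
    (hr : 0 < r) {i j : Fin N} (hlt : effRes Qp i j < 2 / 3) :
    NegDefOrth (r • ((3 : ℝ) • vecMulVec (ev i j) (ev i j) - (2 : ℝ) • lap G)) := by
  intro z hz hsum
  have henergy : 0 < z ⬝ᵥ (lap G *ᵥ z) := by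
    rw [lap_eq_lapMatrix]; exact hG.dotProduct_lapMatrix_mulVec_pos hz hsum
  have hcs := sq_ev_dotProduct_le_effRes_mul hG hQp i j z
  rw [dotProduct_jacobian_mulVec]
  exact mul_neg_of_pos_of_neg hr (by nlinarith)

lemma hasPosEig_jacobian_of_lt_effRes (hG : G.Connected) (hQp : IsMP (lap G) Qp) {r : ℝ}
    (hr : 0 < r) {i j : Fin N} (hgt : 2 / 3 < effRes Qp i j) :
    HasPosEig (r • ((3 : ℝ) • vecMulVec (ev i j) (ev i j) - (2 : ℝ) • lap G)) := by
  have hsymm : (r • ((3 : ℝ) • vecMulVec (ev i j) (ev i j) - (2 : ℝ) • lap G)).IsSymm :=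
    ((IsSymm.smul (transpose_vecMulVec _ _) 3).sub ((isSymm_lap G).smul 2)).smul r
  refine (isHermitian_iff_isSymm.mpr hsymm).exists_pos_eigenvalue_of_dotProduct_mulVec_pos
    (z := Qp *ᵥ ev i j) ?_
  rw [dotProduct_jacobian_mulVec, lap_mulVec_mulVec_ev hG hQp, dotProduct_comm _ (ev i j)]
  change 0 < r * (3 * effRes Qp i j ^ 2 - 2 * effRes Qp i j)
  exact mul_pos hr (by nlinarith)

end EffectiveResistance

theorem stmt_6_general {N : ℕ} (G : SimpleGraph (Fin N)) (hG : G.Connected) (r : ℝ) (hr : 0 < r)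
    (i j : Fin N) (Qp : Matrix (Fin N) (Fin N) ℝ) (hQp : IsMP (lap G) Qp) :
    (effRes Qp i j < 2 / 3 →
      NegDefOrth (r • ((3 : ℝ) • vecMulVec (ev i j) (ev i j) - (2 : ℝ) • lap G))) ∧
    (2 / 3 < effRes Qp i j →
      HasPosEig (r • ((3 : ℝ) • vecMulVec (ev i j) (ev i j) - (2 : ℝ) • lap G))) :=
  ⟨negDefOrth_jacobian_of_effRes_lt hG hQp hr, hasPosEig_jacobian_of_lt_effRes hG hQp hr⟩

/-- stability of a detailed-balance state with a single consensus edge is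
decided by the effective resistance of that edge compared to `2/3`. -/
theorem stmt_6 {N : ℕ} (G : SimpleGraph (Fin N)) (hG : G.Connected) (r : ℝ) (hr : 0 < r)
    (i j : Fin N) (hij : G.Adj i j) (x : Fin N → ℝ)
    (hcons : x i = x j)
    (hdiss : ∀ a b, G.Adj a b → ¬({a, b} : Set (Fin N)) = {i, j} →
      (x a - x b = Real.sqrt r ∨ x a - x b = - Real.sqrt r))
    (Qp : Matrix (Fin N) (Fin N) ℝ) (hQp : IsMP (lap G) Qp) :
    (effRes Qp i j < 2 / 3 →
      NegDefOrth (r • ((3 : ℝ) • vecMulVec (ev i j) (ev i j) - (2 : ℝ) • lap G))) ∧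
    (2 / 3 < effRes Qp i j →
      HasPosEig (r • ((3 : ℝ) • vecMulVec (ev i j) (ev i j) - (2 : ℝ) • lap G))) :=
  stmt_6_general G hG r hr i j Qp hQp
end

section
/- On a finite tree graph T with r > 0, every stationary state of the system dx_i/dt = Σ_{j~i}[r(x_i − x_j) − (x_i − x_j)³] is a detailed-balance state, i.e. satisfies (x*_i − x*_j) ∈ {0, √r, −√r} for every edge i~j. -/
open Finset Matrix Polynomial
open scoped Classical

/-!
Summing the stationarity equations over all nodes on one side of an edge `i ~ j` cancels every
internal edge term by antisymmetry; in a tree the edge `i ~ j` is the only one crossing, so its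
term `r d - d³` with `d = x i - x j` vanishes, forcing `d ∈ {0, ±√r}`.
-/

theorem Finset.sum_sum_eq_zero_of_antisymm {ι M : Type*} [AddCommGroup M] [IsAddTorsionFree M]
    (s : Finset ι) (f : ι → ι → M) (hf : ∀ a b, f a b = -f b a) :
    ∑ a ∈ s, ∑ b ∈ s, f a b = 0 := by
  rw [← neg_eq_self]
  conv_rhs => rw [Finset.sum_comm]
  simp only [← Finset.sum_neg_distrib, ← hf]

namespace SimpleGraph

variable {V M : Type*} {G : SimpleGraph V}

theorem IsBridge.eq_of_adj_of_reachable_of_not_reachable {i j k l : V}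
    (hb : G.IsBridge s(i, j)) (hadj : G.Adj k l) (hk : (G.deleteEdges {s(i, j)}).Reachable i k)
    (hl : ¬ (G.deleteEdges {s(i, j)}).Reachable i l) : k = i ∧ l = j := by
  by_cases he : s(k, l) = s(i, j)
  · rcases Sym2.eq_iff.mp he with ⟨rfl, rfl⟩ | ⟨rfl, rfl⟩
    · exact ⟨rfl, rfl⟩
    · exact absurd hk (isBridge_iff.mp hb)
  · exact absurd (hk.trans ((deleteEdges_adj ..).mpr ⟨hadj, by simpa using he⟩).reachable) hl

variable [G.LocallyFinite] [AddCommGroup M] [IsAddTorsionFree M]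

theorem sum_sum_neighborFinset_eq_sum_sum_filter_notMem (φ : V → V → M)
    (hφ : ∀ k l, φ k l = -φ l k) (S : Finset V) :
    ∑ k ∈ S, ∑ l ∈ G.neighborFinset k, φ k l =
      ∑ k ∈ S, ∑ l ∈ (G.neighborFinset k).filter (· ∉ S), φ k l := by
  have hinternal : ∑ k ∈ S, ∑ l ∈ (G.neighborFinset k).filter (· ∈ S), φ k l = 0 := by
    have hfilter (k : V) : (G.neighborFinset k).filter (· ∈ S) = S.filter (G.Adj k) := by
      ext l; simp [and_comm]
    simp only [hfilter, Finset.sum_filter]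
    refine S.sum_sum_eq_zero_of_antisymm _ fun k l => ?_
    rw [G.adj_comm l k]
    split_ifs <;> simp [hφ k l]
  simp only [← Finset.sum_filter_add_sum_filter_not (G.neighborFinset _) (· ∈ S),
    Finset.sum_add_distrib, hinternal, zero_add]

variable [Fintype V]

theorem IsBridge.flow_eq_zero (φ : V → V → M) (hφ : ∀ k l, φ k l = -φ l k)
    (hdiv : ∀ k, ∑ l ∈ G.neighborFinset k, φ k l = 0) {i j : V} (hb : G.IsBridge s(i, j))
    (hij : G.Adj i j) : φ i j = 0 := by
  set S := univ.filter ((G.deleteEdges {s(i, j)}).Reachable i)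
  have hiS : i ∈ S := by simp [S]
  have hcut : ∀ k ∈ S, ∀ l ∈ (G.neighborFinset k).filter (· ∉ S), k = i ∧ l = j := by
    intro k hk l hl
    simp only [S, mem_filter, mem_univ, true_and, mem_neighborFinset] at hk hl
    exact hb.eq_of_adj_of_reachable_of_not_reachable hl.1 hk hl.2
  calc φ i j = ∑ k ∈ S, ∑ l ∈ (G.neighborFinset k).filter (· ∉ S), φ k l := by
        rw [sum_eq_single_of_mem i hiS, sum_eq_single_of_mem j]
        · simpa [S, hij] using isBridge_iff.mp hb
        · exact fun l hl hlj => absurd (hcut i hiS l hl).2 hlj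
        · exact fun k hk hki => sum_eq_zero fun l hl => absurd (hcut k hk l hl).1 hki
    _ = ∑ k ∈ S, ∑ l ∈ G.neighborFinset k, φ k l :=
        (sum_sum_neighborFinset_eq_sum_sum_filter_notMem φ hφ S).symm
    _ = 0 := sum_eq_zero fun k _ => hdiv k

theorem IsAcyclic.flow_eq_zero (hG : G.IsAcyclic) (φ : V → V → M) (hφ : ∀ k l, φ k l = -φ l k)
    (hdiv : ∀ k, ∑ l ∈ G.neighborFinset k, φ k l = 0) {i j : V} (hij : G.Adj i j) :
    φ i j = 0 :=
  (isAcyclic_iff_forall_adj_isBridge.mp hG hij).flow_eq_zero φ hφ hdiv hij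

end SimpleGraph

theorem eq_zero_or_eq_sqrt_or_eq_neg_sqrt_of_mul_sub_pow_three_eq_zero {r d : ℝ}
    (h : r * d - d ^ 3 = 0) : d = 0 ∨ d = Real.sqrt r ∨ d = -Real.sqrt r := by
  have hfactor : d * (r - d ^ 2) = 0 := by linear_combination h
  rcases mul_eq_zero.mp hfactor with hd | hd
  · exact Or.inl hd
  · rw [show r = d ^ 2 by linarith, Real.sqrt_sq_eq_abs]
    rcases abs_choice d with h | h <;> simp [h]

theorem stmt_14_general {N : ℕ} (G : SimpleGraph (Fin N)) (hT : G.IsTree) (r : ℝ)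
    (x : Fin N → ℝ) (hstat : ∀ i, rhs G r x i = 0) :
    DetailedBalance G r x := fun i j hij =>
  eq_zero_or_eq_sqrt_or_eq_neg_sqrt_of_mul_sub_pow_three_eq_zero <|
    hT.isAcyclic.flow_eq_zero (fun k l => r * (x k - x l) - (x k - x l) ^ 3)
      (fun k l => by ring) hstat hij

/-- on a tree, every stationary state is a detailed-balance state. -/
theorem stmt_14 {N : ℕ} (G : SimpleGraph (Fin N)) (hT : G.IsTree) (r : ℝ) (hr : 0 < r)
    (x : Fin N → ℝ) (hstat : ∀ i, rhs G r x i = 0) :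
    DetailedBalance G r x :=
  stmt_14_general G hT r x hstat
end

section
/- On the complete graph K_N, every detailed-balance stationary state x* (with r > 0) takes exactly two values: there is a constant c and a subset V ⊆ nodes such that x*_i = c + √r for i ∈ V and x*_i = c for i ∉ V. Consequently K_N has exactly 2^N detailed-balance stationary states up to the choice of c. -/
open Finset Matrix Polynomial
open scoped Classical

/-- on the complete graph, every detailed-balance state takes exactly two
values `c` and `c + √r`; there are `2^N` detailed-balance states with values in `{0, √r}`. -/
theorem stmt_17 {N : ℕ} (hN : 3 ≤ N) (r : ℝ) (hr : 0 < r) (x : Fin N → ℝ)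
    (hx : ∀ i j : Fin N, i ≠ j →
      (x i - x j = 0 ∨ x i - x j = Real.sqrt r ∨ x i - x j = - Real.sqrt r)) :
    (∃ (c : ℝ) (V : Finset (Fin N)), ∀ i, x i = if i ∈ V then c + Real.sqrt r else c) ∧
    Set.ncard {y : Fin N → ℝ | (∀ i, y i = 0 ∨ y i = Real.sqrt r) ∧
      ∀ i j : Fin N, i ≠ j →
        (y i - y j = 0 ∨ y i - y j = Real.sqrt r ∨ y i - y j = - Real.sqrt r)} =
      2 ^ N := by
  have hs : 0 < Real.sqrt r := Real.sqrt_pos.mpr hr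
  set s := Real.sqrt r with hsdef
  constructor
  · -- part 1: two values
    have hNpos : 0 < N := by omega
    let i0 : Fin N := ⟨0, hNpos⟩
    have key : ∀ i, x i = x i0 ∨ x i = x i0 + s ∨ x i = x i0 - s := by
      intro i
      by_cases h : i = i0
      · left; rw [h]
      · rcases hx i i0 h with h1 | h1 | h1
        · left; linarith
        · right; left; linarith
        · right; right; linarith
    have notboth : ¬ ((∃ j, x j = x i0 + s) ∧ (∃ k, x k = x i0 - s)) := by
      rintro ⟨⟨j, hj⟩, ⟨k, hk⟩⟩
      have hjk : j ≠ k := by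
        intro h; rw [h] at hj; rw [hj] at hk; linarith
      rcases hx j k hjk with h1 | h1 | h1 <;> rw [hj, hk] at h1 <;> linarith
    by_cases hlow : ∃ k, x k = x i0 - s
    · refine ⟨x i0 - s, Finset.univ.filter (fun i => x i ≠ x i0 - s), fun i => ?_⟩
      rcases key i with h | h | h
      · rw [if_pos (Finset.mem_filter.mpr ⟨Finset.mem_univ i,
          by rw [h]; intro hc; linarith⟩)]
        linarith
      · exfalso; exact notboth ⟨⟨i, h⟩, hlow⟩
      · rw [if_neg (by simp only [Finset.mem_filter, Finset.mem_univ, true_and, not_not]; exact h)]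
        exact h
    · refine ⟨x i0, Finset.univ.filter (fun i => x i = x i0 + s), fun i => ?_⟩
      rcases key i with h | h | h
      · rw [if_neg (fun hc => by
          have := (Finset.mem_filter.mp hc).2; rw [h] at this; linarith)]
        exact h
      · rw [if_pos (Finset.mem_filter.mpr ⟨Finset.mem_univ i, h⟩)]
        exact h
      · exact absurd ⟨i, h⟩ hlow
  · -- part 2: counting
    set f : Finset (Fin N) → (Fin N → ℝ) := fun V i => if i ∈ V then s else 0 with hf
    have hinj : Function.Injective f := by
      intro V W h
      ext i
      have := congrFun h i
      simp only [hf] at this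
      by_cases hi : i ∈ V <;> by_cases hw : i ∈ W <;>
        simp [hi, hw] at this ⊢ <;> linarith
    have hset : {y : Fin N → ℝ | (∀ i, y i = 0 ∨ y i = s) ∧
        ∀ i j : Fin N, i ≠ j →
          (y i - y j = 0 ∨ y i - y j = s ∨ y i - y j = - s)} = Set.range f := by
      ext y
      constructor
      · rintro ⟨hy, -⟩
        refine ⟨Finset.univ.filter (fun i => y i = s), ?_⟩
        ext i
        simp only [hf, Finset.mem_filter, Finset.mem_univ, true_and]
        rcases hy i with h | h
        · rw [if_neg (by rw [h]; intro hc; linarith), h]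
        · rw [if_pos h, h]
      · rintro ⟨V, rfl⟩
        constructor
        · intro i
          by_cases hi : i ∈ V <;> simp [hf, hi]
        · intro i j _
          by_cases hi : i ∈ V <;> by_cases hj : j ∈ V <;> simp [hf, hi, hj]
    rw [hset, ← Set.image_univ, Set.ncard_image_of_injective _ hinj, Set.ncard_univ]
    simp [Nat.card_eq_fintype_card]
end

section
/- On the complete graph K_N with r > 0, let x* be the two-valued detailed-balance stationary state determined by a subset of V nodes at value √r and N−V nodes at value 0. The eigenvalues of the Jacobian J(x*) = r(Q= − 2Q≠) are: 0 (multiplicity 1, constant vector), −2rN (multiplicity 1), −3r(V − N/3) with multiplicity N−V−1, and 3r(V − 2N/3) with multiplicity V−1. Hence x* is linearly stable if N/3 < V < 2N/3 and linearly unstable if V < N/3 or V > 2N/3. -/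
open Finset Matrix Polynomial
open scoped Classical

/-!
On `K_N` the consensus and dissensus Laplacians at a state only see which level set each node
lies in, so `J(x*)` is a diagonal matrix plus a matrix that is constant on the blocks `S × S`,
`S × Sᶜ`, `Sᶜ × S`, `Sᶜ × Sᶜ`, with block pattern `r [[-1, 2], [2, -1]]`. A block-constant matrix
factors through the `N × 2` class-indicator matrix, so the matrix determinant lemma reduces
`det (t - J)` to a `2 × 2` determinant. The block part kills `e_i - e_j` for `i, j` in the same
class, so these are eigenvectors for the diagonal values `r (3V - 2N)` and `r (N - 3V)`; on
mean-zero vectors the block part contributes `-6 r (∑_S z)² ≤ 0`, so stability holds as soon as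
both diagonal values are negative.
-/

namespace Matrix

variable {ι m K : Type*}

theorem submatrix_self_eq_mul_mul_transpose [Fintype m] [DecidableEq m] [CommSemiring K]
    (C : Matrix m m K) (e : ι → m) :
    C.submatrix e e =
      (1 : Matrix m m K).submatrix e id * C * ((1 : Matrix m m K).submatrix e id)ᵀ := by
  ext i j
  simp [mul_apply, one_apply]

theorem transpose_one_submatrix_mul_diagonal_mul [Fintype ι] [DecidableEq ι] [DecidableEq m]
    [CommSemiring K] (e : ι → m) (f : ι → K) :
    ((1 : Matrix m m K).submatrix e id)ᵀ * diagonal f * (1 : Matrix m m K).submatrix e id =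
      diagonal fun p => ∑ i with e i = p, f i := by
  ext p q
  simp only [mul_apply, transpose_apply, submatrix_apply, one_apply, diagonal_apply, id,
    Finset.sum_filter]
  split_ifs with hpq
  · subst hpq
    refine Finset.sum_congr rfl fun i _ => ?_
    by_cases h : e i = p <;> simp [h, eq_comm]
  · refine Finset.sum_eq_zero fun i _ => ?_
    by_cases h : e i = q <;> simp [h, Ne.symm hpq, Finset.sum_ite_eq']

theorem det_diagonal_add_submatrix [Fintype ι] [DecidableEq ι] [Fintype m] [DecidableEq m]
    [Field K] (e : ι → m) (d : m → K) (hd : ∀ p, d p ≠ 0) (C : Matrix m m K) :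
    det (diagonal (fun i => d (e i)) + C.submatrix e e) =
      (∏ p, d p ^ #{i | e i = p}) * det (1 + C * diagonal fun p => #{i | e i = p} / d p) := by
  have hD : IsUnit (diagonal fun i => d (e i)).det := by
    simpa [det_diagonal, Finset.prod_ne_zero_iff] using fun i => hd (e i)
  have hfiber : (fun p => ∑ i with e i = p, (d (e i))⁻¹) = fun p => #{i | e i = p} / d p := by
    ext p
    rw [Finset.sum_congr rfl fun i hi => by rw [(Finset.mem_filter.mp hi).2]]
    simp [div_eq_mul_inv]
  have hinv : (diagonal fun i => d (e i))⁻¹ = diagonal fun i => (d (e i))⁻¹ :=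
    inv_eq_left_inv <| by simp [diagonal_mul_diagonal, inv_mul_cancel₀ (hd _)]
  rw [submatrix_self_eq_mul_mul_transpose, Matrix.mul_assoc, det_add_mul _ _ hD, det_diagonal,
    hinv, Matrix.mul_assoc, Matrix.mul_assoc, ← Matrix.mul_assoc _ (diagonal _),
    transpose_one_submatrix_mul_diagonal_mul, ← Finset.prod_fiberwise' univ e d]
  simp [hfiber]

theorem dotProduct_submatrix_self_mulVec [Fintype ι] [Fintype m] [DecidableEq m] [CommSemiring K]
    (C : Matrix m m K) (e : ι → m) (z : ι → K) :
    z ⬝ᵥ (C.submatrix e e *ᵥ z) =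
      (fun p => ∑ i with e i = p, z i) ⬝ᵥ (C *ᵥ fun p => ∑ i with e i = p, z i) := by
  have hU : ((1 : Matrix m m K).submatrix e id)ᵀ *ᵥ z = fun p => ∑ i with e i = p, z i := by
    ext p; simp [mulVec, dotProduct, one_apply, Finset.sum_filter]
  rw [submatrix_self_eq_mul_mul_transpose, ← mulVec_mulVec, ← mulVec_mulVec, hU,
    dotProduct_mulVec, ← mulVec_transpose, hU]

theorem diagonal_add_submatrix_mulVec_single_sub_single [Fintype ι] [DecidableEq ι] [CommRing K]
    (e : ι → m) (d : m → K) (C : Matrix m m K) {i j : ι} (h : e i = e j) :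
    (diagonal (fun k => d (e k)) + C.submatrix e e) *ᵥ (Pi.single i 1 - Pi.single j 1) =
      d (e i) • (Pi.single i 1 - Pi.single j 1) := by
  ext k
  by_cases hki : k = i
  · subst hki; by_cases hkj : k = j <;> simp [mulVec_sub, mulVec_single, h, hkj]
  · by_cases hkj : k = j
    · subst hkj; simp [mulVec_sub, mulVec_single, h, hki]
    · simp [mulVec_sub, mulVec_single, h, hki, hkj]

theorem eval_charpoly_diagonal_add_submatrix [Fintype ι] [DecidableEq ι] [CommRing K] (e : ι → m)
    (d : m → K) (C : Matrix m m K) (t : K) :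
    (diagonal (fun i => d (e i)) + C.submatrix e e).charpoly.eval t =
      det (diagonal (fun i => t - d (e i)) + (-C).submatrix e e) := by
  rw [eval_charpoly]
  congr 1
  ext i j
  by_cases hij : i = j
  · subst hij; simp; ring
  · simp [hij]

theorem dotProduct_diagonal_mulVec_neg [Fintype ι] [DecidableEq ι] [CommRing K]
    [LinearOrder K] [IsStrictOrderedRing K] {c z : ι → K} (hc : ∀ i, c i < 0) (hz : z ≠ 0) :
    z ⬝ᵥ (diagonal c *ᵥ z) < 0 := by
  obtain ⟨k, hk⟩ := Function.ne_iff.mp hz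
  have hterm : ∀ i, z i * (c i * z i) = c i * z i ^ 2 := fun i => by ring
  simp only [dotProduct, mulVec_diagonal, hterm]
  refine neg_pos.mp ?_
  rw [← Finset.sum_neg_distrib]
  exact Finset.sum_pos' (fun i _ => by nlinarith [hc i, sq_nonneg (z i)])
    ⟨k, mem_univ k, by nlinarith [hc k, pow_pos (abs_pos.mpr hk) 2, sq_abs (z k)]⟩

end Matrix

-- Unlike `SimpleGraph.neighborFinset_top`, this holds for any `Fintype` instance, such as the
-- classical one in `lapEq` and `lapNe`.
theorem SimpleGraph.neighborFinset_top_eq {V : Type*} [Fintype V] [DecidableEq V] (v : V)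
    [Fintype ((⊤ : SimpleGraph V).neighborSet v)] :
    (⊤ : SimpleGraph V).neighborFinset v = {v}ᶜ := by
  ext; simp [eq_comm]

theorem lapEq_sub_two_smul_lapNe_top {N : ℕ} {m : Type*} [DecidableEq m] (x : Fin N → ℝ)
    (e : Fin N → m) (hx : ∀ i j, x i = x j ↔ e i = e j) :
    lapEq ⊤ x - (2 : ℝ) • lapNe ⊤ x =
      diagonal (fun i => 3 * (#{k | e k = e i} : ℝ) - 2 * N) +
        (of fun p q : m => if p = q then (-1 : ℝ) else 2).submatrix e e := by
  ext i j
  simp only [lapEq, lapNe, SimpleGraph.neighborFinset_top_eq, Matrix.sub_apply,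
    Matrix.smul_apply, Matrix.add_apply, diagonal_apply, submatrix_apply, of_apply,
    SimpleGraph.top_adj, ne_eq, hx, smul_eq_mul]
  by_cases hij : i = j
  · subst hij
    have hEq : #{k ∈ {i}ᶜ | e i = e k} + 1 = #{k | e k = e i} := by
      rw [← card_erase_add_one (s := {k | e k = e i}) (mem_filter.mpr ⟨mem_univ i, rfl⟩)]
      congr 2
      ext k
      simp [eq_comm, and_comm]
    have hNe : #{k ∈ {i}ᶜ | ¬ e i = e k} + #{k | e k = e i} = N := by
      have hfilter :
          {k ∈ ({i}ᶜ : Finset (Fin N)) | ¬ e i = e k} = ({k | ¬ e k = e i} : Finset (Fin N)) := by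
        ext k
        simp only [mem_filter, mem_compl, mem_singleton, mem_univ, true_and]
        exact ⟨fun h => Ne.symm h.2, fun h => ⟨fun hk => h (hk ▸ rfl), Ne.symm h⟩⟩
      rw [hfilter, add_comm, card_filter_add_card_filter_not, card_univ, Fintype.card_fin]
    simp only [if_true, not_true_eq_false, and_false]
    have hEq' : (#{k ∈ {i}ᶜ | e i = e k} : ℝ) + 1 = #{k | e k = e i} := by
      exact_mod_cast hEq
    have hNe' : (#{k ∈ {i}ᶜ | ¬ e i = e k} : ℝ) + #{k | e k = e i} = N := by
      exact_mod_cast hNe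
    linarith
  · by_cases he : e i = e j <;> simp [hij, he]

theorem hasPosEig_diagonal_add_submatrix {N : ℕ} {m : Type*} (e : Fin N → m) (d : m → ℝ)
    (C : Matrix m m ℝ) {i j : Fin N} (hij : i ≠ j) (he : e i = e j) (hd : 0 < d (e i)) :
    HasPosEig (diagonal (fun k => d (e k)) + C.submatrix e e) := by
  refine ⟨d (e i), Pi.single i 1 - Pi.single j 1, hd, fun h => ?_,
    diagonal_add_submatrix_mulVec_single_sub_single e d C he⟩
  simpa [hij] using congrFun h i

def side {N : ℕ} (S : Finset (Fin N)) (i : Fin N) : Fin 2 := if i ∈ S then 0 else 1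

theorem card_side_eq_zero {N : ℕ} (S : Finset (Fin N)) : #{i | side S i = 0} = #S := by
  congr 1; ext i; by_cases h : i ∈ S <;> simp [side, h]

theorem card_side_eq_one {N : ℕ} (S : Finset (Fin N)) : #{i | side S i = 1} = N - #S := by
  rw [show N - #S = #Sᶜ by simp [card_compl]]
  congr 1; ext i; by_cases h : i ∈ S <;> simp [side, h]

def twoValuedJacobian {N : ℕ} (r : ℝ) (S : Finset (Fin N)) : Matrix (Fin N) (Fin N) ℝ :=
  diagonal (fun i => ![r * (3 * #S - 2 * N), r * (N - 3 * #S)] (side S i)) +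
    !![-r, 2 * r; 2 * r, -r].submatrix (side S) (side S)

theorem smul_lapEq_sub_two_smul_lapNe_top_eq {N : ℕ} {r : ℝ} (hr : 0 < r)
    (S : Finset (Fin N)) :
    r • (lapEq ⊤ (fun i => if i ∈ S then √r else 0) -
      (2 : ℝ) • lapNe ⊤ (fun i => if i ∈ S then √r else 0)) = twoValuedJacobian r S := by
  have hsqrt : √r ≠ 0 := (Real.sqrt_pos.mpr hr).ne'
  have hx : ∀ i j,
      ((if i ∈ S then √r else 0) = if j ∈ S then √r else 0) ↔ side S i = side S j := by
    intro i j
    by_cases hi : i ∈ S <;> by_cases hj : j ∈ S <;> simp [side, hi, hj, hsqrt, hsqrt.symm]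
  have hSN : #S ≤ N := by simpa using card_le_univ S
  rw [lapEq_sub_two_smul_lapNe_top _ (side S) hx]
  ext i j
  simp only [twoValuedJacobian, Matrix.smul_apply, Matrix.add_apply, diagonal_apply,
    submatrix_apply, of_apply, smul_eq_mul]
  have hcard : ∀ p, (#{k | side S k = p} : ℝ) = ![(#S : ℝ), N - #S] p := by
    intro p; fin_cases p
    · simp [card_side_eq_zero]
    · simp [card_side_eq_one, Nat.cast_sub hSN]
  rw [hcard]
  by_cases hij : i = j
  · subst hij
    by_cases hi : i ∈ S <;>
      simp only [side, hi, ↓reduceIte, cons_val_zero, cons_val_one, cons_val_fin_one,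
        cons_val'] <;> ring
  · by_cases hi : i ∈ S <;> by_cases hj : j ∈ S <;> simp [side, hi, hj, hij, mul_comm]

theorem charpoly_twoValuedJacobian {N : ℕ} (r : ℝ) (S : Finset (Fin N)) (hS0 : 0 < #S)
    (hSN : #S < N) :
    (twoValuedJacobian r S).charpoly =
      X * (X + C (2 * r * N)) * (X + C (3 * r * ((#S : ℝ) - N / 3))) ^ (N - #S - 1) *
        (X - C (3 * r * ((#S : ℝ) - 2 * N / 3))) ^ (#S - 1) := by
  set d : Fin 2 → ℝ := ![r * (3 * #S - 2 * N), r * (N - 3 * #S)]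
  -- It suffices to compare values away from the diagonal values `d p`, where the matrix
  -- determinant lemma applies.
  refine eq_of_infinite_eval_eq _ _ <| Set.Infinite.mono (s := ({d 0, d 1} : Set ℝ)ᶜ)
    (fun t ht => ?_) (Set.toFinite _).infinite_compl
  have hd : ∀ p, t - d p ≠ 0 := by
    simp only [Set.mem_compl_iff, Set.mem_insert_iff, Set.mem_singleton_iff, not_or] at ht
    intro p; fin_cases p
    · exact sub_ne_zero.mpr ht.1
    · exact sub_ne_zero.mpr ht.2
  simp only [Set.mem_ofPred_eq, twoValuedJacobian, eval_charpoly_diagonal_add_submatrix]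
  rw [det_diagonal_add_submatrix (side S) (fun p => t - d p) hd, Fin.prod_univ_two, det_fin_two]
  simp only [d, Fin.isValue, cons_val_zero, card_side_eq_zero, cons_val_one, cons_val_fin_one,
    card_side_eq_one, neg_of, neg_cons, neg_neg, Matrix.neg_empty, cons_mul, Nat.succ_eq_add_one,
    Nat.reduceAdd, Matrix.empty_mul, Equiv.symm_apply_apply, Matrix.add_apply, one_apply_eq,
    of_apply, cons_val', vecMul_diagonal, neg_mul, Nat.cast_sub hSN.le, ne_eq, zero_ne_one,
    not_false_eq_true, one_apply_ne, zero_add, one_ne_zero, mul_neg, map_mul, map_natCast, map_sub,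
    eval_mul, eval_X, eval_add, eval_C, eval_natCast, eval_pow, eval_sub]
  have ha : t - r * (3 * #S - 2 * N) ≠ 0 := hd 0
  have hb : t - r * (N - 3 * #S) ≠ 0 := hd 1
  rw [show t + 3 * r * ((#S : ℝ) - N / 3) = t - r * (N - 3 * #S) by ring,
    show t - 3 * r * ((#S : ℝ) - 2 * N / 3) = t - r * (3 * #S - 2 * N) by ring,
    ← pow_sub_one_mul hS0.ne', ← pow_sub_one_mul (Nat.sub_pos_of_lt hSN).ne']
  field_simp
  ring

theorem negDefOrth_twoValuedJacobian {N : ℕ} {r : ℝ} (hr : 0 < r) (S : Finset (Fin N))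
    (hlo : (N : ℝ) / 3 < #S) (hhi : (#S : ℝ) < 2 * N / 3) :
    NegDefOrth (twoValuedJacobian r S) := by
  intro z hz hsum
  set w : Fin 2 → ℝ := fun p => ∑ i with side S i = p, z i
  have hw : w 0 + w 1 = 0 := by
    rw [← hsum, ← Finset.sum_fiberwise univ (side S) z, Fin.sum_univ_two]
  have hblock : w ⬝ᵥ (!![-r, 2 * r; 2 * r, -r] *ᵥ w) ≤ 0 := by
    have h1 : w 1 = -w 0 := by linarith
    simp only [dotProduct, mulVec, Fin.sum_univ_two, h1, of_apply, cons_val', cons_val_zero,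
      cons_val_one, cons_val_fin_one]
    nlinarith [sq_nonneg (w 0)]
  have hdiag : z ⬝ᵥ
      (diagonal (fun i => ![r * (3 * #S - 2 * N), r * (N - 3 * #S)] (side S i)) *ᵥ z) < 0 := by
    refine dotProduct_diagonal_mulVec_neg (fun i => ?_) hz
    by_cases hi : i ∈ S <;>
      simp only [side, hi, ↓reduceIte, cons_val_zero, cons_val_one, cons_val_fin_one] <;>
      nlinarith
  rw [twoValuedJacobian, add_mulVec, dotProduct_add, dotProduct_submatrix_self_mulVec]
  linarith

theorem hasPosEig_twoValuedJacobian {N : ℕ} {r : ℝ} (hr : 0 < r) (S : Finset (Fin N))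
    (hS0 : 0 < #S) (hSN : #S < N) (h : (#S : ℝ) < N / 3 ∨ 2 * (N : ℝ) / 3 < #S) :
    HasPosEig (twoValuedJacobian r S) := by
  rcases h with hlo | hhi
  · have hcard : 1 < #Sᶜ := by
      have : 3 * #S < N := by exact_mod_cast (by linarith : (3 * #S : ℝ) < N)
      rw [card_compl, Fintype.card_fin]; omega
    obtain ⟨i, hi, j, hj, hij⟩ := one_lt_card.mp hcard
    rw [mem_compl] at hi hj
    refine hasPosEig_diagonal_add_submatrix _ _ _ hij (by simp [side, hi, hj]) ?_
    simp only [side, hi, if_false, cons_val_one, cons_val_fin_one]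
    nlinarith
  · have hcard : 1 < #S := by
      have : 2 * N < 3 * #S := by exact_mod_cast (by linarith : (2 * N : ℝ) < 3 * #S)
      omega
    obtain ⟨i, hi, j, hj, hij⟩ := one_lt_card.mp hcard
    refine hasPosEig_diagonal_add_submatrix _ _ _ hij (by simp [side, hi, hj]) ?_
    simp only [side, hi, if_true, cons_val_zero]
    nlinarith

/-- spectrum of the Jacobian at a two-valued detailed-balance state on the
complete graph (as a characteristic polynomial factorization) and the resulting
stability/instability dichotomy for `N/3 < V < 2N/3` versus `V < N/3` or `V > 2N/3`. -/
theorem stmt_18 {N : ℕ} (r : ℝ) (hr : 0 < r) (S : Finset (Fin N))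
    (hS0 : 0 < S.card) (hSN : S.card < N) :
    (Matrix.charpoly (r • (lapEq (⊤ : SimpleGraph (Fin N))
        (fun i => if i ∈ S then Real.sqrt r else 0) -
      (2 : ℝ) • lapNe (⊤ : SimpleGraph (Fin N))
        (fun i => if i ∈ S then Real.sqrt r else 0))) =
      X * (X + C (2 * r * N)) *
        (X + C (3 * r * ((S.card : ℝ) - N / 3))) ^ (N - S.card - 1) *
        (X - C (3 * r * ((S.card : ℝ) - 2 * N / 3))) ^ (S.card - 1)) ∧
    ((N : ℝ) / 3 < S.card ∧ (S.card : ℝ) < 2 * N / 3 →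
      NegDefOrth (r • (lapEq (⊤ : SimpleGraph (Fin N))
          (fun i => if i ∈ S then Real.sqrt r else 0) -
        (2 : ℝ) • lapNe (⊤ : SimpleGraph (Fin N))
          (fun i => if i ∈ S then Real.sqrt r else 0)))) ∧
    ((S.card : ℝ) < (N : ℝ) / 3 ∨ 2 * (N : ℝ) / 3 < S.card →
      HasPosEig (r • (lapEq (⊤ : SimpleGraph (Fin N))
          (fun i => if i ∈ S then Real.sqrt r else 0) -
        (2 : ℝ) • lapNe (⊤ : SimpleGraph (Fin N))
          (fun i => if i ∈ S then Real.sqrt r else 0)))) := by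
  rw [smul_lapEq_sub_two_smul_lapNe_top_eq hr S]
  exact ⟨charpoly_twoValuedJacobian r S hS0 hSN,
    fun h => negDefOrth_twoValuedJacobian hr S h.1 h.2,
    hasPosEig_twoValuedJacobian hr S hS0 hSN⟩
end

section
/- On the 3-cycle graph C_3, every state x with (x_1−m)² + (x_2−m)² + (x_3−m)² = 2r/3, where m = (x_1+x_2+x_3)/3, is a stationary state of the system dx_i/dt = Σ_{j~i}[r(x_i−x_j) − (x_i−x_j)³] (r > 0). -/
open Finset Matrix Polynomial
open scoped Classical

/-- on the triangle graph, every state on the circle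
`Σ (x_i - m)² = 2r/3` (with `m` the mean) is stationary. -/
theorem stmt_19 (r : ℝ) (hr : 0 < r) (x : Fin 3 → ℝ)
    (hcirc : (x 0 - (x 0 + x 1 + x 2) / 3) ^ 2 + (x 1 - (x 0 + x 1 + x 2) / 3) ^ 2 +
      (x 2 - (x 0 + x 1 + x 2) / 3) ^ 2 = 2 * r / 3) :
    ∀ i, rhs (⊤ : SimpleGraph (Fin 3)) r x i = 0 := by
  have hr' : r = (x 0 - x 1)^2 + (x 0 - x 1)*(x 1 - x 2) + (x 1 - x 2)^2 := by nlinarith [hcirc]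
  intro i
  rw [rhs]
  rw [Finset.sum_subset (Finset.subset_univ _) (fun j _ hj => by
    have : i = j := by simpa [SimpleGraph.mem_neighborFinset] using hj
    simp [this])]
  rw [Fin.sum_univ_three]
  have hi : x i = x 0 ∨ x i = x 1 ∨ x i = x 2 := by fin_cases i <;> simp
  rcases hi with h|h|h <;> rw [h, hr'] <;> ring
end
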